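/- Fix ε > 0, r ≥ 1, δ > 0, and an l×m partition-regular matrix A over F_p. For all sufficiently large n and any functions f_1,...,f_r : F_p^n → [0,1], there exist a subspace H ≤ F_p^n of bounded codimension and elements z_1,...,z_m ∈ F_p^n such that: (i) A(z_1,...,z_m)^T = 0; (ii) each coset H+z_j is ε-regular for all f_1,...,f_r; (iii) for each i ∈ [r], either E_{x∈H+z_j} f_i(x) < δ for all j ∈ [m], or E_{x∈H+z_j} f_i(x) ≥ δ for all j ∈ [m]. -/

import Mathlib

open Matrix
open scoped Classical

/-- `e_p(t) = exp(2πit/p)`. -/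
noncomputable def ep (p : ℕ) (t : ZMod p) : ℂ :=
  Complex.exp (2 * Real.pi * Complex.I * t.val / p)

/-- The average of `f` on the coset `c + H`. -/
noncomputable def cosetAvg {p n : ℕ} [Fact p.Prime]
    (H : Submodule (ZMod p) (Fin n → ZMod p)) (c : Fin n → ZMod p)
    (f : (Fin n → ZMod p) → ℝ) : ℝ :=
  (∑ h : H, f (c + h)) / (Fintype.card H)

/-- `f` is `ε`-regular on the coset `c + H`. -/
noncomputable def epsRegular {p n : ℕ} [Fact p.Prime] (ε : ℝ)
    (H : Submodule (ZMod p) (Fin n → ZMod p)) (c : Fin n → ZMod p)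
    (f : (Fin n → ZMod p) → ℝ) : Prop :=
  ∀ r : Fin n → ZMod p,
    ‖(∑ h : H, ((f (c + h) - cosetAvg H c f : ℝ) : ℂ) * ep p (r ⬝ᵥ (c + h))) /
      (Fintype.card H)‖ ≤ ε

/-- An `l × m` matrix `A` over `F_p` is partition-regular: for every number of colours `r`
there is `N` such that for all `n ≥ N`, every `r`-colouring of `F_p^n` admits a
monochromatic solution to `Ax = 0` lying in `F_p^n \ {0}`. -/
def PartitionRegular (p l m : ℕ) (A : Matrix (Fin l) (Fin m) (ZMod p)) : Prop :=
  ∀ r : ℕ, 0 < r → ∃ N : ℕ, ∀ n ≥ N, ∀ χ : (Fin n → ZMod p) → Fin r,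
    ∃ x : Fin m → (Fin n → ZMod p),
      (∀ i, ∑ j : Fin m, A i j • x j = 0) ∧ (∀ j, x j ≠ 0) ∧
      ∀ j j', χ (x j) = χ (x j')

/-!
Energy increment: refining `H` by the kernel of one witnessing frequency per irregular coset
raises `∑ₓ ∑ᵢ (E_{x+H} fᵢ)²` by `ε²` per irregular point (Cauchy–Schwarz on each coset), and
this energy never exceeds `r |V|`. So after boundedly many steps, each raising the
codimension from `c` to at most `c + p ^ c`, fewer than a `p ^ (-N)` fraction of the points
lie in irregular cosets. A random linear map `Φ : 𝔽_p^N → 𝔽_p^n` then sends every nonzero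
vector into a regular coset (union bound), and partition regularity in dimension `N`, applied
to the colouring `w ↦ {i | δ ≤ E_{Φ w + H} fᵢ}`, yields a monochromatic solution `x`; its image
`z = Φ ∘ x` is again a solution.
-/

open Finset

theorem Submodule.finrank_le_finrank_inf_ker_add {K V W : Type*} [Field K] [AddCommGroup V]
    [Module K V] [FiniteDimensional K V] [AddCommGroup W] [Module K W] [FiniteDimensional K W]
    (H : Submodule K V) (L : V →ₗ[K] W) :
    Module.finrank K H ≤ Module.finrank K (H ⊓ LinearMap.ker L : Submodule K V)
      + Module.finrank K W := by
  have := Submodule.finrank_sup_add_finrank_inf_eq H (LinearMap.ker L)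
  have := L.finrank_range_add_finrank_ker
  have := (H ⊔ LinearMap.ker L).finrank_le
  have := (LinearMap.range L).finrank_le
  omega

theorem AddMonoidHom.card_filter_mem_mul_card {G M : Type*} [AddGroup G] [Fintype G]
    [AddMonoid M] [Fintype M] [DecidableEq M] (φ : G →+ M) (hφ : Function.Surjective φ)
    (S : Finset M) : #{g | φ g ∈ S} * Fintype.card M = #S * Fintype.card G := by
  have hfiber : ∀ y, #{g | φ g = y} = #{g | φ g = 0} := fun y =>
    AddMonoidHom.card_fiber_eq_of_mem_range φ (hφ y) (hφ 0)
  have hG : Fintype.card G = Fintype.card M * #{g | φ g = 0} := by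
    rw [← card_univ, card_eq_sum_card_fiberwise (f := φ) (t := univ) (by simp)]
    simp [hfiber]
  have hS : #{g | φ g ∈ S} = #S * #{g | φ g = 0} := by
    rw [card_eq_sum_card_fiberwise (f := φ) (t := S) (by intro g; simp), ← smul_eq_mul,
      ← sum_const]
    refine sum_congr rfl fun y hy => ?_
    rw [filter_filter, ← hfiber y]
    congr 1
    ext g
    simp only [mem_filter, mem_univ, true_and, and_iff_right_iff_imp]
    exact fun h => h ▸ hy
  rw [hG, hS]
  ring

/-- Union bound over the nonzero `v`: each `g ↦ ∑ t, v t • g t` is a surjective additive map,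
so only a `#S / |W|` fraction of the tuples `g` send `v` into `S`. -/
theorem exists_linearMap_forall_ne_zero_notMem {K W : Type*} [Field K] [Fintype K]
    [AddCommGroup W] [Module K W] [Fintype W] [DecidableEq W] {k : ℕ} (S : Finset W)
    (hS : Fintype.card K ^ k * #S < Fintype.card W) :
    ∃ Φ : (Fin k → K) →ₗ[K] W, ∀ v ≠ 0, Φ v ∉ S := by
  let ev (v : Fin k → K) : (Fin k → W) →+ W :=
    (∑ t, v t • (LinearMap.proj t : (Fin k → W) →ₗ[K] W)).toAddMonoidHom
  have hev : ∀ v g, ev v g = Fintype.linearCombination K g v := fun v g => by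
    simp [ev, Fintype.linearCombination_apply]
  have hsurj : ∀ v : Fin k → K, v ≠ 0 → Function.Surjective (ev v) := by
    intro v hv y
    obtain ⟨t₀, ht₀⟩ := Function.ne_iff.mp hv
    refine ⟨Pi.single t₀ ((v t₀)⁻¹ • y), ?_⟩
    simp [hev, Fintype.linearCombination_apply, Pi.single_apply, smul_smul, mul_inv_cancel₀ ht₀]
  by_contra! hbad
  have hcover : (univ : Finset (Fin k → W))
      ⊆ univ.biUnion fun v : {v : Fin k → K // v ≠ 0} => {g | ev v g ∈ S} := by
    intro g _
    obtain ⟨v, hv, hvS⟩ := hbad (Fintype.linearCombination K g)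
    simp only [mem_biUnion, mem_filter, mem_univ, true_and]
    exact ⟨⟨v, hv⟩, by rwa [hev]⟩
  have hV : Fintype.card {v : Fin k → K // v ≠ 0} ≤ Fintype.card K ^ k := by
    simpa only [Fintype.card_fun, Fintype.card_fin] using
      Fintype.card_subtype_le fun v : Fin k → K => v ≠ 0
  have hpos : 0 < Fintype.card (Fin k → W) := Fintype.card_pos
  refine lt_irrefl (Fintype.card (Fin k → W) * Fintype.card W) ?_
  calc Fintype.card (Fin k → W) * Fintype.card W
      ≤ (∑ v : {v : Fin k → K // v ≠ 0}, #{g | ev v g ∈ S}) * Fintype.card W := by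
        gcongr
        exact card_univ (α := Fin k → W) ▸ (card_le_card hcover).trans card_biUnion_le
    _ = Fintype.card {v : Fin k → K // v ≠ 0} * #S * Fintype.card (Fin k → W) := by
        rw [sum_mul, sum_congr rfl fun v _ => (ev v.1).card_filter_mem_mul_card (hsurj v.1 v.2) S,
          sum_const, card_univ, smul_eq_mul, mul_assoc]
    _ ≤ Fintype.card K ^ k * #S * Fintype.card (Fin k → W) := by gcongr
    _ < Fintype.card (Fin k → W) * Fintype.card W := by
        rw [mul_comm (Fintype.card (Fin k → W))]
        exact Nat.mul_lt_mul_of_pos_right hS hpos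

theorem PartitionRegular.exists_monochromatic {p l m : ℕ} {A : Matrix (Fin l) (Fin m) (ZMod p)}
    (hA : PartitionRegular p l m A) (κ : Type*) [Fintype κ] [Nonempty κ] :
    ∃ N, ∀ n ≥ N, ∀ χ : (Fin n → ZMod p) → κ, ∃ x : Fin m → (Fin n → ZMod p),
      (∀ i, ∑ j, A i j • x j = 0) ∧ (∀ j, x j ≠ 0) ∧ ∀ j j', χ (x j) = χ (x j') := by
  obtain ⟨N, hN⟩ := hA (Fintype.card κ) Fintype.card_pos
  refine ⟨N, fun n hn χ => ?_⟩
  obtain ⟨x, hx, hx0, hmono⟩ := hN n hn (Fintype.equivFin κ ∘ χ)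
  exact ⟨x, hx, hx0, fun j j' => (Fintype.equivFin κ).injective (hmono j j')⟩

theorem forall_lt_or_forall_le_of_setOf_le_eq {ι κ α : Type*} [LinearOrder α] {a : ι → κ → α}
    {δ : α} (h : ∀ j j', {i | δ ≤ a j i} = {i | δ ≤ a j' i}) (i : κ) :
    (∀ j, a j i < δ) ∨ ∀ j, δ ≤ a j i := by
  by_cases hi : ∃ j, δ ≤ a j i
  · obtain ⟨j₀, hj₀⟩ := hi
    exact Or.inr fun j => (Set.ext_iff.mp (h j₀ j) i).mp hj₀
  · simp only [not_exists, not_le] at hi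
    exact Or.inl hi

/-- After `t` refinement steps from codimension `0` the codimension is at most
`codimBound p t`, since a step adds at most the number `p ^ c` of cosets. -/
def codimBound (p : ℕ) : ℕ → ℕ
  | 0 => 0
  | t + 1 => codimBound p t + p ^ codimBound p t

theorem norm_ep {p : ℕ} (t : ZMod p) : ‖ep p t‖ = 1 := by
  rw [ep, show 2 * Real.pi * Complex.I * t.val / p = ((2 * Real.pi * t.val / p : ℝ) : ℂ) * Complex.I
    by push_cast; ring, Complex.norm_exp_ofReal_mul_I]

section CosetRegularity

variable {p n : ℕ} [Fact p.Prime]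

local notation "V" => Fin n → ZMod p

theorem sum_add_of_mem {M : Type*} [AddCommMonoid M] (H : Submodule (ZMod p) V) {h₀ : V}
    (hh₀ : h₀ ∈ H) (F : V → M) : ∑ h : H, F (h₀ + h) = ∑ h : H, F h :=
  Fintype.sum_equiv (Equiv.addLeft ⟨h₀, hh₀⟩) _ _ fun h => by simp

theorem cosetAvg_add_of_mem (H : Submodule (ZMod p) V) (c : V) {h₀ : V} (hh₀ : h₀ ∈ H)
    (f : V → ℝ) : cosetAvg H (c + h₀) f = cosetAvg H c f := by
  simp only [cosetAvg, add_assoc, sum_add_of_mem H hh₀ fun v => f (c + v)]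

theorem cosetAvg_sub_const (H : Submodule (ZMod p) V) (c : V) (f : V → ℝ) (a : ℝ) :
    cosetAvg H c (fun x => f x - a) = cosetAvg H c f - a := by
  have : (Fintype.card H : ℝ) ≠ 0 := by positivity
  simp only [cosetAvg, sum_sub_distrib, sum_const, card_univ, nsmul_eq_mul]
  field_simp

theorem cosetAvg_mem_Icc (H : Submodule (ZMod p) V) (c : V) {f : V → ℝ}
    (hf : ∀ x, f x ∈ Set.Icc (0 : ℝ) 1) : cosetAvg H c f ∈ Set.Icc (0 : ℝ) 1 := by
  have hH : (0 : ℝ) < Fintype.card H := by positivity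
  refine ⟨div_nonneg (sum_nonneg fun h _ => (hf _).1) hH.le, (div_le_one hH).2 ?_⟩
  calc ∑ h : H, f (c + h) ≤ ∑ _h : H, (1 : ℝ) := sum_le_sum fun h _ => (hf _).2
    _ = Fintype.card H := by simp

theorem sum_mul_eq_sum_cosetAvg_mul {H H' : Submodule (ZMod p) V}
    (hle : H' ≤ H) (c : V) (f : V → ℝ) {φ : V → ℂ} (hφ : ∀ x, ∀ h' ∈ H', φ (x + h') = φ x) :
    ∑ h : H, (f (c + h) : ℂ) * φ (c + h) = ∑ h : H, (cosetAvg H' (c + h) f : ℂ) * φ (c + h) := by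
  have hH' : (Fintype.card H' : ℂ) ≠ 0 := by simp
  apply mul_left_cancel₀ hH'
  calc (Fintype.card H' : ℂ) * ∑ h : H, (f (c + h) : ℂ) * φ (c + h)
      = ∑ h' : H', ∑ h : H, (f (c + (h' + h)) : ℂ) * φ (c + (h' + h)) := by
        rw [← nsmul_eq_mul, ← card_univ, ← sum_const]
        exact sum_congr rfl fun h' _ =>
          (sum_add_of_mem H (hle h'.2) fun v => (f (c + v) : ℂ) * φ (c + v)).symm
    _ = ∑ h : H, ∑ h' : H', (f (c + h + h') : ℂ) * φ (c + h) := by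
        rw [sum_comm]
        refine sum_congr rfl fun h _ => sum_congr rfl fun h' _ => ?_
        rw [show c + ((h' : V) + h) = c + h + h' by abel, hφ _ _ h'.2]
    _ = _ := by
        rw [mul_sum]
        refine sum_congr rfl fun h _ => ?_
        rw [← sum_mul, cosetAvg]
        push_cast
        field_simp

theorem sum_cosetAvg_of_le {H H' : Submodule (ZMod p) V} (hle : H' ≤ H) (c : V) (f : V → ℝ) :
    ∑ h : H, cosetAvg H' (c + h) f = Fintype.card H * cosetAvg H c f := by
  have hH : (Fintype.card H : ℝ) ≠ 0 := by positivity
  have := sum_mul_eq_sum_cosetAvg_mul hle c f (φ := fun _ => 1) fun _ _ _ => rfl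
  simp only [mul_one] at this
  have hsum : ∑ h : H, cosetAvg H' (c + h) f = ∑ h : H, f (c + h) := by exact_mod_cast this.symm
  rw [hsum, cosetAvg]
  field_simp

noncomputable def cosetCoeff (H : Submodule (ZMod p) V) (c : V) (f : V → ℝ) (ξ : V) : ℂ :=
  ∑ h : H, ((f (c + h) - cosetAvg H c f : ℝ) : ℂ) * ep p (ξ ⬝ᵥ (c + h))

theorem epsRegular_iff {ε : ℝ} {H : Submodule (ZMod p) V} {c : V} {f : V → ℝ} :
    epsRegular ε H c f ↔ ∀ ξ, ‖cosetCoeff H c f ξ‖ ≤ ε * Fintype.card H := by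
  have hH : (0 : ℝ) < Fintype.card H := by positivity
  simp only [epsRegular, norm_div, Complex.norm_natCast, div_le_iff₀ hH, cosetCoeff]

theorem cosetCoeff_add_of_mem (H : Submodule (ZMod p) V) (c : V) {h₀ : V} (hh₀ : h₀ ∈ H)
    (f : V → ℝ) (ξ : V) : cosetCoeff H (c + h₀) f ξ = cosetCoeff H c f ξ := by
  simp only [cosetCoeff, cosetAvg_add_of_mem H c hh₀, add_assoc,
    sum_add_of_mem H hh₀ fun v => ((f (c + v) - cosetAvg H c f : ℝ) : ℂ) * ep p (ξ ⬝ᵥ (c + v))]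

/-- A frequency that vanishes on `H' ≤ H` only sees the `H'`-coset averages of `f`. -/
theorem norm_cosetCoeff_le {H H' : Submodule (ZMod p) V} (hle : H' ≤ H) (c : V) (f : V → ℝ)
    {ξ : V} (hξ : ∀ h' ∈ H', ξ ⬝ᵥ h' = 0) :
    ‖cosetCoeff H c f ξ‖ ≤ ∑ h : H, |cosetAvg H' (c + h) f - cosetAvg H c f| := by
  have hinv : ∀ x, ∀ h' ∈ H', ep p (ξ ⬝ᵥ (x + h')) = ep p (ξ ⬝ᵥ x) := fun x h' hh' => by
    rw [dotProduct_add, hξ h' hh', add_zero]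
  have key := sum_mul_eq_sum_cosetAvg_mul hle c (fun x => f x - cosetAvg H c f)
    (φ := fun x => ep p (ξ ⬝ᵥ x)) hinv
  beta_reduce at key
  rw [cosetCoeff, key]
  refine (norm_sum_le _ _).trans (le_of_eq (sum_congr rfl fun h _ => ?_))
  rw [norm_mul, norm_ep, mul_one, cosetAvg_sub_const, Complex.norm_real, Real.norm_eq_abs]

theorem card_mul_sq_add_sq_norm_le {H H' : Submodule (ZMod p) V} (hle : H' ≤ H) (c : V)
    (f : V → ℝ) {ξ : V} (hξ : ∀ h' ∈ H', ξ ⬝ᵥ h' = 0) :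
    Fintype.card H * cosetAvg H c f ^ 2 + ‖cosetCoeff H c f ξ‖ ^ 2 / Fintype.card H
      ≤ ∑ h : H, cosetAvg H' (c + h) f ^ 2 := by
  have hH : (0 : ℝ) < Fintype.card H := by positivity
  set d : H → ℝ := fun h => cosetAvg H' (c + h) f - cosetAvg H c f
  have hd : ∑ h, d h = 0 := by
    simp only [d, sum_sub_distrib, sum_cosetAvg_of_le hle, sum_const, card_univ, nsmul_eq_mul,
      sub_self]
  have hcs : ‖cosetCoeff H c f ξ‖ ^ 2 ≤ Fintype.card H * ∑ h, d h ^ 2 := by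
    calc ‖cosetCoeff H c f ξ‖ ^ 2 ≤ (∑ h, |d h|) ^ 2 := by
          gcongr
          exact norm_cosetCoeff_le hle c f hξ
      _ ≤ Fintype.card H * ∑ h, d h ^ 2 := by
          simpa only [sq_abs, card_univ] using
            sq_sum_le_card_mul_sum_sq (s := univ) (f := fun h => |d h|)
  have hsq : ∑ h : H, cosetAvg H' (c + h) f ^ 2
      = ∑ h, d h ^ 2 + Fintype.card H * cosetAvg H c f ^ 2 := by
    have : ∀ h : H, cosetAvg H' (c + h) f ^ 2
        = d h ^ 2 + 2 * cosetAvg H c f * d h + cosetAvg H c f ^ 2 := fun h => by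
      simp only [d]; ring
    simp only [this, sum_add_distrib, ← mul_sum, hd, mul_zero, add_zero, sum_const, card_univ,
      nsmul_eq_mul]
  have : ‖cosetCoeff H c f ξ‖ ^ 2 / Fintype.card H ≤ ∑ h, d h ^ 2 := by
    rw [div_le_iff₀ hH]
    linarith
  linarith

variable {r : ℕ}

noncomputable def cosetEnergy (H : Submodule (ZMod p) V) (f : Fin r → V → ℝ) : ℝ :=
  ∑ x : V, ∑ i, cosetAvg H x (f i) ^ 2

noncomputable def irregularSet (ε : ℝ) (H : Submodule (ZMod p) V) (f : Fin r → V → ℝ) :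
    Finset V :=
  {x | ¬ ∀ i, epsRegular ε H x (f i)}

theorem cosetEnergy_nonneg (H : Submodule (ZMod p) V) (f : Fin r → V → ℝ) :
    0 ≤ cosetEnergy H f :=
  sum_nonneg fun _ _ => sum_nonneg fun _ _ => sq_nonneg _

theorem cosetEnergy_le (H : Submodule (ZMod p) V) {f : Fin r → V → ℝ}
    (hf : ∀ i x, f i x ∈ Set.Icc (0 : ℝ) 1) : cosetEnergy H f ≤ r * Fintype.card V := by
  calc cosetEnergy H f ≤ ∑ _x : V, ∑ _i : Fin r, (1 : ℝ) := by
        refine sum_le_sum fun x _ => sum_le_sum fun i _ => ?_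
        obtain ⟨h0, h1⟩ := cosetAvg_mem_Icc H x (hf i)
        nlinarith
    _ = r * Fintype.card V := by simp [mul_comm]

theorem card_mul_cosetEnergy_eq (H H' : Submodule (ZMod p) V) (f : Fin r → V → ℝ) :
    Fintype.card H * cosetEnergy H' f
      = ∑ x : V, ∑ i, ∑ h : H, cosetAvg H' (x + h) (f i) ^ 2 := by
  calc Fintype.card H * cosetEnergy H' f
      = ∑ h : H, ∑ x : V, ∑ i, cosetAvg H' (x + h) (f i) ^ 2 := by
        rw [← nsmul_eq_mul, ← card_univ, ← sum_const]
        exact sum_congr rfl fun h _ =>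
          (Fintype.sum_equiv (Equiv.addRight (h : V)) _ _ fun _ => rfl).symm
    _ = _ := by rw [sum_comm]; exact sum_congr rfl fun x _ => sum_comm

theorem cosetEnergy_add_le {ε : ℝ} (hε : 0 ≤ ε) {H H' : Submodule (ZMod p) V} (hle : H' ≤ H)
    (f : Fin r → V → ℝ)
    (hwit : ∀ x ∈ irregularSet ε H f, ∃ i ξ, (∀ h' ∈ H', ξ ⬝ᵥ h' = 0) ∧
      ε * Fintype.card H < ‖cosetCoeff H x (f i) ξ‖) :
    cosetEnergy H f + #(irregularSet ε H f) * ε ^ 2 ≤ cosetEnergy H' f := by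
  have hH : (0 : ℝ) < Fintype.card H := by positivity
  have hpoint : ∀ x : V, Fintype.card H * ∑ i, cosetAvg H x (f i) ^ 2
      + (if x ∈ irregularSet ε H f then Fintype.card H * ε ^ 2 else 0)
      ≤ ∑ i, ∑ h : H, cosetAvg H' (x + h) (f i) ^ 2 := by
    intro x
    have hbase : ∀ i, Fintype.card H * cosetAvg H x (f i) ^ 2
        ≤ ∑ h : H, cosetAvg H' (x + h) (f i) ^ 2 := fun i => by
      refine (le_add_of_nonneg_right ?_).trans
        (card_mul_sq_add_sq_norm_le hle x (f i) (ξ := 0) (by simp))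
      positivity
    split_ifs with hx
    · obtain ⟨i₀, ξ, hξ, hbig⟩ := hwit x hx
      have hgain := card_mul_sq_add_sq_norm_le hle x (f i₀) hξ
      have : Fintype.card H * ε ^ 2 ≤ ‖cosetCoeff H x (f i₀) ξ‖ ^ 2 / Fintype.card H := by
        rw [le_div_iff₀ hH]
        nlinarith [pow_le_pow_left₀ (by positivity) hbig.le 2]
      rw [mul_sum, ← add_sum_erase _ _ (mem_univ i₀), ← add_sum_erase _ _ (mem_univ i₀)]
      have := sum_le_sum fun i (_ : i ∈ univ.erase i₀) => hbase i
      linarith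
    · simpa [mul_sum] using sum_le_sum fun i _ => hbase i
  have hsum := sum_le_sum fun x (_ : x ∈ univ) => hpoint x
  rw [← card_mul_cosetEnergy_eq, sum_add_distrib, ← mul_sum, sum_ite_mem, univ_inter, sum_const,
    nsmul_eq_mul] at hsum
  rw [cosetEnergy]
  nlinarith

theorem mem_irregularSet {ε : ℝ} {H : Submodule (ZMod p) V} {f : Fin r → V → ℝ} {x : V} :
    x ∈ irregularSet ε H f ↔ ∃ i ξ, ε * Fintype.card H < ‖cosetCoeff H x (f i) ξ‖ := by
  simp [irregularSet, epsRegular_iff]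

/-- `H'` is `H` cut down by the kernel of one witnessing frequency per coset of `H`. -/
theorem exists_refinement {ε : ℝ} (hε : 0 ≤ ε) (H : Submodule (ZMod p) V)
    (f : Fin r → V → ℝ) :
    ∃ H' ≤ H, Module.finrank (ZMod p) H
        ≤ Module.finrank (ZMod p) H' + Fintype.card (V ⧸ H) ∧
      cosetEnergy H f + #(irregularSet ε H f) * ε ^ 2 ≤ cosetEnergy H' f := by
  have hwit : ∀ q : V ⧸ H, ∃ ξ : V, q.out ∈ irregularSet ε H f →
      ∃ i, ε * Fintype.card H < ‖cosetCoeff H q.out (f i) ξ‖ := by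
    intro q
    by_cases hq : q.out ∈ irregularSet ε H f
    · obtain ⟨i, ξ, hξ⟩ := mem_irregularSet.mp hq
      exact ⟨ξ, fun _ => ⟨i, hξ⟩⟩
    · exact ⟨0, fun h => absurd h hq⟩
  choose ξ hξ using hwit
  let L : V →ₗ[ZMod p] (V ⧸ H → ZMod p) := Matrix.mulVecLin (Matrix.of ξ)
  refine ⟨H ⊓ LinearMap.ker L, inf_le_left, ?_, cosetEnergy_add_le hε inf_le_left f ?_⟩
  · simpa [Module.finrank_fintype_fun_eq_card] using H.finrank_le_finrank_inf_ker_add L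
  intro x hx
  set q : V ⧸ H := Submodule.Quotient.mk x
  have hxq : x - q.out ∈ H := (Submodule.Quotient.eq H).mp (Submodule.Quotient.mk_out q).symm
  have hx_eq : x = q.out + (x - q.out) := by abel
  have hcoeff : ∀ i η, cosetCoeff H x (f i) η = cosetCoeff H q.out (f i) η := fun i η => by
    rw [hx_eq, cosetCoeff_add_of_mem H _ hxq]
  obtain ⟨i₀, η, hη⟩ := mem_irregularSet.mp hx
  obtain ⟨i, hi⟩ := hξ q (mem_irregularSet.mpr ⟨i₀, η, hcoeff i₀ η ▸ hη⟩)
  refine ⟨i, ξ q, fun h' hh' => ?_, hcoeff i _ ▸ hi⟩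
  exact congrFun (LinearMap.mem_ker.mp (Submodule.mem_inf.mp hh').2) q

theorem card_quotient_le_pow (H : Submodule (ZMod p) V) {c : ℕ}
    (hc : n ≤ Module.finrank (ZMod p) H + c) : Fintype.card (V ⧸ H) ≤ p ^ c := by
  have := H.finrank_quotient_add_finrank
  rw [Module.finrank_fin_fun] at this
  rw [Module.card_eq_pow_finrank (K := ZMod p), ZMod.card]
  exact Nat.pow_le_pow_right (Fact.out : p.Prime).pos (by omega)

theorem exists_subspace_few_irregular_or_energy_ge {ε : ℝ} (hε : 0 ≤ ε) (η : ℝ)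
    (f : Fin r → V → ℝ) (t : ℕ) :
    ∃ H : Submodule (ZMod p) V, n ≤ Module.finrank (ZMod p) H + codimBound p t ∧
      ((#(irregularSet ε H f) : ℝ) < η * Fintype.card V ∨
        t * (η * Fintype.card V * ε ^ 2) ≤ cosetEnergy H f) := by
  induction t with
  | zero =>
    refine ⟨⊤, by simp [codimBound], Or.inr ?_⟩
    simpa using cosetEnergy_nonneg ⊤ f
  | succ t ih =>
    obtain ⟨H, hcodim, hH⟩ := ih
    by_cases hfew : (#(irregularSet ε H f) : ℝ) < η * Fintype.card V
    · exact ⟨H, hcodim.trans (by simp [codimBound]), Or.inl hfew⟩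
    obtain ⟨H', hle, hrank, hgain⟩ := exists_refinement hε H f
    refine ⟨H', ?_, Or.inr ?_⟩
    · have := card_quotient_le_pow H hcodim
      simp only [codimBound]
      omega
    · have hE := hH.resolve_left hfew
      push_cast
      nlinarith [mul_le_mul_of_nonneg_right (not_lt.mp hfew) (sq_nonneg ε)]

/-- The arithmetic regularity lemma; the energy bound `r |V|` caps the number of steps. -/
theorem exists_subspace_few_irregular {ε η : ℝ} (hε : 0 < ε) (hη : 0 < η)
    {f : Fin r → V → ℝ} (hf : ∀ i x, f i x ∈ Set.Icc (0 : ℝ) 1) :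
    ∃ H : Submodule (ZMod p) V,
      n ≤ Module.finrank (ZMod p) H + codimBound p (⌊r / (η * ε ^ 2)⌋₊ + 1) ∧
      (#(irregularSet ε H f) : ℝ) < η * Fintype.card V := by
  obtain ⟨H, hcodim, hH⟩ := exists_subspace_few_irregular_or_energy_ge hε.le η f
    (⌊r / (η * ε ^ 2)⌋₊ + 1)
  refine ⟨H, hcodim, hH.resolve_right fun hE => ?_⟩
  have hV : (0 : ℝ) < Fintype.card V := by positivity
  have := (Nat.lt_floor_add_one (r / (η * ε ^ 2)))
  rw [div_lt_iff₀ (by positivity)] at this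
  have := hE.trans (cosetEnergy_le H hf)
  push_cast at this
  nlinarith

end CosetRegularity

theorem select_multiple_subcosets_general {p : ℕ} [Fact p.Prime] (l m r : ℕ)
    (ε δ : ℝ) (hε : 0 < ε)
    (A : Matrix (Fin l) (Fin m) (ZMod p)) (hA : PartitionRegular p l m A) :
    ∃ C N : ℕ, ∀ n ≥ N, ∀ f : Fin r → (Fin n → ZMod p) → ℝ,
      (∀ i x, f i x ∈ Set.Icc (0 : ℝ) 1) →
      ∃ (H : Submodule (ZMod p) (Fin n → ZMod p)) (z : Fin m → (Fin n → ZMod p)),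
        Module.finrank (ZMod p) (Fin n → ZMod p) ≤ Module.finrank (ZMod p) H + C ∧
        (∀ i, ∑ j : Fin m, A i j • z j = 0) ∧
        (∀ j i, epsRegular ε H (z j) (f i)) ∧
        (∀ i : Fin r, (∀ j, cosetAvg H (z j) (f i) < δ) ∨
          ∀ j, δ ≤ cosetAvg H (z j) (f i)) := by
  obtain ⟨N, hN⟩ := hA.exists_monochromatic (Set (Fin r))
  set η : ℝ := ((Fintype.card (ZMod p) ^ N : ℕ) : ℝ)⁻¹
  refine ⟨codimBound p (⌊r / (η * ε ^ 2)⌋₊ + 1), 0, fun n _ f hf => ?_⟩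
  obtain ⟨H, hcodim, hfew⟩ := exists_subspace_few_irregular hε (by positivity : 0 < η) hf
  rw [inv_mul_eq_div, lt_div_iff₀' (by positivity)] at hfew
  obtain ⟨Φ, hΦ⟩ := exists_linearMap_forall_ne_zero_notMem (k := N) (irregularSet ε H f)
    (by exact_mod_cast hfew)
  obtain ⟨x, hx, hx0, hmono⟩ := hN N le_rfl fun w => {i | δ ≤ cosetAvg H (Φ w) (f i)}
  refine ⟨H, fun j => Φ (x j), by rwa [Module.finrank_fin_fun], fun i => ?_, fun j => ?_,
    forall_lt_or_forall_le_of_setOf_le_eq hmono⟩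
  · simp_rw [← map_smul, ← map_sum, hx i, map_zero]
  · simpa [irregularSet] using hΦ _ (hx0 j)

/-- selecting multiple subcosets: for a partition-regular matrix `A`,
`ε, δ > 0` and `r ≥ 1`, for all sufficiently large `n` and all `f₁,...,f_r : F_p^n → [0,1]`
there exist a subspace `H` of bounded codimension and `z₁,...,z_m` with `Az = 0`, every
coset `z_j + H` `ε`-regular for every `f_i`, and for each colour `i` the averages of `f_i`
on the cosets `z_j + H` all below `δ` or all at least `δ`. -/
theorem select_multiple_subcosets {p : ℕ} [Fact p.Prime] (l m r : ℕ) (hr : 1 ≤ r)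
    (ε δ : ℝ) (hε : 0 < ε) (hδ : 0 < δ)
    (A : Matrix (Fin l) (Fin m) (ZMod p)) (hA : PartitionRegular p l m A) :
    ∃ C N : ℕ, ∀ n ≥ N, ∀ f : Fin r → (Fin n → ZMod p) → ℝ,
      (∀ i x, f i x ∈ Set.Icc (0 : ℝ) 1) →
      ∃ (H : Submodule (ZMod p) (Fin n → ZMod p)) (z : Fin m → (Fin n → ZMod p)),
        Module.finrank (ZMod p) (Fin n → ZMod p) ≤ Module.finrank (ZMod p) H + C ∧
        (∀ i, ∑ j : Fin m, A i j • z j = 0) ∧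
        (∀ j i, epsRegular ε H (z j) (f i)) ∧
        (∀ i : Fin r, (∀ j, cosetAvg H (z j) (f i) < δ) ∨
          ∀ j, δ ≤ cosetAvg H (z j) (f i)) :=
  select_multiple_subcosets_general l m r ε δ hε A hA
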